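/- Let m_N(θ) be the expected hitting time of {−2N,2N} for the alternating-wells random walk (explicit formula as in the paper). Then h_N(θ) = N^{−1} log m_N(θ) converges pointwise on (0,1)\{1/2} to h(θ) = |log((1−θ)/θ)|, and the function m_N is symmetric: m_N(θ) = m_N(1−θ) for all θ ∈ (0,1). -/

import Mathlib

/-!
With `r = θ / (1 - θ)`, for `θ < 1/2` one has `m_N(θ) = r⁻ᴺ g_N` where `g_N` tends to a
positive limit because `rᴺ → 0`; hence `N⁻¹ log m_N(θ) → log r⁻¹`. Clearing denominators,
`m_N(θ)` becomes an expression in `θᴺ` and `(1 - θ)ᴺ` that is visibly invariant under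
`θ ↦ 1 - θ`, and this symmetry transfers the limit to `θ > 1/2`.
-/

open Filter Topology

/-- Expected hitting time of `{-2N, 2N}` for the alternating-wells walk. -/
noncomputable def mAW (N : ℕ) (θ : ℝ) : ℝ :=
  if θ = 1 / 2 then 4 * (N : ℝ) ^ 2 else
    (2 * θ * (1 - θ) / (1 - 2 * θ) ^ 2) / (θ * (θ / (1 - θ)) ^ N + (1 - θ))
      * (1 - (θ / (1 - θ)) ^ N) * (((1 - θ) / θ) ^ N - (θ / (1 - θ)) ^ N)

lemma inv_sub_self_eq_inv_mul {K : Type*} [DivisionRing K] (y : K) :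
    y⁻¹ - y = y⁻¹ * (1 - y ^ 2) := by
  rcases eq_or_ne y 0 with rfl | hy
  · simp
  · rw [mul_sub, mul_one, sq, inv_mul_cancel_left₀ hy]

lemma mAW_eq_pow_mul (N : ℕ) {θ : ℝ} (hθ : θ ≠ 1 / 2) :
    mAW N θ = ((1 - θ) / θ) ^ N *
      (2 * θ * (1 - θ) / (1 - 2 * θ) ^ 2 / (θ * (θ / (1 - θ)) ^ N + (1 - θ))
        * (1 - (θ / (1 - θ)) ^ N) * (1 - ((θ / (1 - θ)) ^ N) ^ 2)) := by
  rw [mAW, if_neg hθ, ← inv_div θ, inv_pow, inv_sub_self_eq_inv_mul]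
  ring

lemma mAW_eq_of_ne_half (N : ℕ) {θ : ℝ} (h0 : 0 < θ) (h1 : θ < 1) (hθ : θ ≠ 1 / 2) :
    mAW N θ = 2 * θ * (1 - θ) / (1 - 2 * θ) ^ 2 * ((1 - θ) ^ N - θ ^ N) ^ 2 *
      (θ ^ N + (1 - θ) ^ N) / (θ ^ N * (1 - θ) ^ N * (θ * θ ^ N + (1 - θ) * (1 - θ) ^ N)) := by
  have : 0 < 1 - θ := by linarith
  rw [mAW, if_neg hθ, div_pow, div_pow]
  field_simp
  ring

lemma mAW_one_sub (N : ℕ) {θ : ℝ} (h0 : 0 < θ) (h1 : θ < 1) :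
    mAW N (1 - θ) = mAW N θ := by
  rcases eq_or_ne θ (1 / 2) with rfl | hθ
  · norm_num
  have hθ' : 1 - θ ≠ 1 / 2 := fun h => hθ (by linarith)
  rw [mAW_eq_of_ne_half N (by linarith) (by linarith) hθ', mAW_eq_of_ne_half N h0 h1 hθ]
  ring

lemma tendsto_inv_mul_log_pow_mul {c L : ℝ} {g : ℕ → ℝ} (hc : c ≠ 0)
    (hg : Tendsto g atTop (𝓝 L)) (hL : L ≠ 0) :
    Tendsto (fun N : ℕ => (N : ℝ)⁻¹ * Real.log (c ^ N * g N)) atTop (𝓝 (Real.log c)) := by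
  have hlog : Tendsto (fun N : ℕ => Real.log c + (N : ℝ)⁻¹ * Real.log (g N)) atTop
      (𝓝 (Real.log c + 0 * Real.log L)) :=
    tendsto_const_nhds.add <| (tendsto_inv_atTop_zero.comp tendsto_natCast_atTop_atTop).mul
      ((Real.continuousAt_log hL).tendsto.comp hg)
  rw [zero_mul, add_zero] at hlog
  refine hlog.congr' ?_
  filter_upwards [eventually_ne_atTop 0, hg.eventually_ne hL] with N hN hgN
  rw [Real.log_mul (pow_ne_zero N hc) hgN, Real.log_pow]
  field_simp

lemma tendsto_log_mAW_of_lt_half {θ : ℝ} (h0 : 0 < θ) (hθ : θ < 1 / 2) :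
    Tendsto (fun N : ℕ => (N : ℝ)⁻¹ * Real.log (mAW N θ)) atTop
      (𝓝 (Real.log ((1 - θ) / θ))) := by
  have h1 : 0 < 1 - θ := by linarith
  set C := 2 * θ * (1 - θ) / (1 - 2 * θ) ^ 2
  set r := θ / (1 - θ)
  have hr : Tendsto (fun N : ℕ => r ^ N) atTop (𝓝 0) :=
    tendsto_pow_atTop_nhds_zero_of_lt_one (by positivity) ((div_lt_one h1).mpr (by linarith))
  have hg : Tendsto (fun N : ℕ => C / (θ * r ^ N + (1 - θ)) * (1 - r ^ N) * (1 - (r ^ N) ^ 2))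
      atTop (𝓝 (C / (θ * 0 + (1 - θ)) * (1 - 0) * (1 - 0 ^ 2))) :=
    ((tendsto_const_nhds.div ((hr.const_mul θ).add_const _) (by simpa using h1.ne')).mul
      (hr.const_sub 1)).mul ((hr.pow 2).const_sub 1)
  simp_rw [mAW_eq_pow_mul _ hθ.ne]
  refine tendsto_inv_mul_log_pow_mul (by positivity) hg ?_
  have : 1 - 2 * θ ≠ 0 := by linarith
  simp only [mul_zero, zero_add, sub_zero, ne_eq, OfNat.ofNat_ne_zero, not_false_eq_true,
    zero_pow, mul_one]
  positivity

/-- Pointwise convergence of `N⁻¹ log m_N` to `|log((1-θ)/θ)|` on `(0,1)\{1/2}`,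
and symmetry `m_N(θ) = m_N(1-θ)` on `(0,1)`. -/
theorem stmt12 :
    (∀ θ : ℝ, 0 < θ → θ < 1 → θ ≠ 1 / 2 →
      Tendsto (fun N : ℕ => (N : ℝ)⁻¹ * Real.log (mAW N θ)) atTop
        (𝓝 |Real.log ((1 - θ) / θ)|)) ∧
    (∀ N : ℕ, ∀ θ : ℝ, 0 < θ → θ < 1 → mAW N θ = mAW N (1 - θ)) := by
  refine ⟨fun θ h0 h1 hθ => ?_, fun N θ h0 h1 => (mAW_one_sub N h0 h1).symm⟩
  rcases hθ.lt_or_gt with hθ | hθ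
  · rw [abs_of_pos (Real.log_pos ((one_lt_div h0).mpr (by linarith)))]
    exact tendsto_log_mAW_of_lt_half h0 hθ
  · have hlim := tendsto_log_mAW_of_lt_half (sub_pos.mpr h1) (by linarith)
    simp_rw [mAW_one_sub _ h0 h1, sub_sub_cancel] at hlim
    rwa [← inv_div, Real.log_inv, abs_neg,
      abs_of_pos (Real.log_pos ((one_lt_div (by linarith)).mpr (by linarith)))]
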